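/- Let m, n be positive integers with m | n, and μ, ν ∈ ℤʳ. If ν ≤ₙ μ then ν ≤ₘ μ, where ≤ₙ denotes the metaplectic Bruhat-type partial order on ℤʳ of degree n. -/

import Mathlib

/-- The affine reflection s_{α̂} for α̂ = n(ε_a − ε_b) + sn²δ: s_{α̂} v = s_α v − snα. -/
def reflAff (r : ℕ) (n : ℤ) (a b : Fin (r + 2)) (s : ℤ) (v : Fin (r + 2) → ℤ) :
    Fin (r + 2) → ℤ :=
  fun j => (v ∘ Equiv.swap a b) j - s * n * (if j = a then 1 else if j = b then -1 else 0)

/-- One covering step of the metaplectic order of degree n: ν is obtained from μ by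
reflecting in a positive affine root α̂ = n(ε_a − ε_b) + sn²δ with ⟨α̂, μ⟩ < 0. -/
def stepRel (r n : ℕ) (ν μ : Fin (r + 2) → ℤ) : Prop :=
  ∃ (a b : Fin (r + 2)) (s : ℤ), a ≠ b ∧ ((s = 0 ∧ a < b) ∨ 0 < s) ∧
    (n : ℤ) * (μ a - μ b) + s * (n : ℤ) ^ 2 < 0 ∧ ν = reflAff r n a b s μ

/-- The metaplectic Bruhat-type partial order ≤ₙ on ℤʳ, as the reflexive-transitive
closure of the covering steps. -/
def leN (r n : ℕ) (ν μ : Fin (r + 2) → ℤ) : Prop :=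
  Relation.ReflTransGen (stepRel r n) ν μ

theorem reflAff_mul_right (r : ℕ) (n k : ℤ) (a b : Fin (r + 2)) (s : ℤ) (v : Fin (r + 2) → ℤ) :
    reflAff r (n * k) a b s v = reflAff r n a b (s * k) v := by
  funext j
  simp only [reflAff]
  ring

/-- The same reflection, read in degree `m`, has translation parameter `s * k`. -/
theorem stepRel.of_mul_right {r m k : ℕ} {ν μ : Fin (r + 2) → ℤ}
    (h : stepRel r (m * k) ν μ) : stepRel r m ν μ := by
  obtain ⟨a, b, s, hab, hpositive, hpairing, rfl⟩ := h
  have hfactor : (k : ℤ) * (m * (μ a - μ b) + s * k * (m : ℤ) ^ 2) < 0 := by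
    push_cast at hpairing
    linarith
  have hk : 0 < (k : ℤ) := by
    rcases (Int.natCast_nonneg k).lt_or_eq with hk | hk
    · exact hk
    · simp [← hk] at hfactor
  refine ⟨a, b, s * k, hab, ?_, neg_of_mul_neg_right hfactor hk.le, ?_⟩
  · rcases hpositive with ⟨rfl, hlt⟩ | hs
    · exact Or.inl ⟨zero_mul _, hlt⟩
    · exact Or.inr (mul_pos hs hk)
  · rw [Nat.cast_mul, reflAff_mul_right]

theorem leN.of_dvd {r m n : ℕ} (hdvd : m ∣ n) {ν μ : Fin (r + 2) → ℤ} (h : leN r n ν μ) :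
    leN r m ν μ := by
  obtain ⟨k, rfl⟩ := hdvd
  exact Relation.ReflTransGen.mono (fun _ _ => stepRel.of_mul_right) _ _ h

theorem stmt11_general (r m n : ℕ) (hdvd : m ∣ n)
    (ν μ : Fin (r + 2) → ℤ) (h : leN r n ν μ) : leN r m ν μ :=
  h.of_dvd hdvd

/-- if m ∣ n and ν ≤ₙ μ, then ν ≤ₘ μ. -/
theorem stmt11 (r m n : ℕ) (hm : 0 < m) (hn : 0 < n) (hdvd : m ∣ n)
    (ν μ : Fin (r + 2) → ℤ) (h : leN r n ν μ) : leN r m ν μ :=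
  stmt11_general r m n hdvd ν μ h
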